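/- Let p ≥ 1 and let F : ℝ^{N×n} → ℝ be positively p-homogeneous (F(λz) = λᵖ F(z) for all λ > 0). Suppose there exists a function θ : [0,∞) → ℝ with θ(t₀) > 0 for some t₀ ∈ (0,∞) such that ∫_{B₁(0)} F(∇φ) dx ≥ θ(∫_{B₁(0)} |∇φ|ᵖ dx) for all φ ∈ W₀^{1,p}(B₁(0); ℝᴺ). Then there exists a > 0 such that ∫_{B₁(0)} F(∇φ) dx ≥ a ∫_{B₁(0)} |∇φ|ᵖ dx for all φ ∈ W₀^{1,p}(B₁(0); ℝᴺ). -/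

import Mathlib

/-!
Both sides of the inequality are positively `p`-homogeneous in `φ`, and the class of test maps
is invariant under `φ ↦ c • φ`. Rescaling a map `φ` with `∫|∇φ|ᵖ = s > 0` to `c • φ` with
`cᵖ s = t₀` turns `θ(t₀) ≤ cᵖ ∫F(∇φ)` into `(θ(t₀)/t₀) s ≤ ∫F(∇φ)`. If `s = 0`, then `∇φ`
vanishes almost everywhere on the ball and `∫F(∇φ) = 0`, because `F(0) = 0`.
-/

noncomputable section

open MeasureTheory Metric Set

/-- The gradient `∇φ(x)` of a map `φ : ℝⁿ → ℝᴺ`, viewed as an element of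
`ℝ^{N×n}` with the Hilbert–Schmidt (Euclidean) norm, i.e. the matrix
`(∂_j φ^i (x))_{i,j}` as an element of `EuclideanSpace ℝ (Fin N × Fin n)`. -/
def gradHS {n N : ℕ} (φ : EuclideanSpace ℝ (Fin n) → EuclideanSpace ℝ (Fin N))
    (x : EuclideanSpace ℝ (Fin n)) : EuclideanSpace ℝ (Fin N × Fin n) :=
  (WithLp.equiv 2 ((Fin N × Fin n) → ℝ)).symm
    fun p => fderiv ℝ φ x (EuclideanSpace.single p.2 1) p.1

/-- Test maps for `W₀^{1,p}(B₁(0); ℝᴺ)`: (continuously differentiable) maps compactly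
supported in the open unit ball. -/
def ZeroBoundaryTest {n N : ℕ}
    (φ : EuclideanSpace ℝ (Fin n) → EuclideanSpace ℝ (Fin N)) : Prop :=
  ContDiff ℝ 1 φ ∧ HasCompactSupport φ ∧
    tsupport φ ⊆ Metric.ball (0 : EuclideanSpace ℝ (Fin n)) 1

lemma map_zero_of_smul_eq_rpow_mul {E : Type*} [Zero E] [SMulZeroClass ℝ E] {F : E → ℝ}
    {p : ℝ} (hp : p ≠ 0) (hF : ∀ c : ℝ, 0 < c → ∀ z, F (c • z) = c ^ p * F z) : F 0 = 0 := by
  have h := hF 2 two_pos 0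
  rw [smul_zero] at h
  have h2p : (2 : ℝ) ^ p ≠ 1 := by
    rw [← Real.rpow_zero 2, Ne, Real.rpow_right_inj two_pos (by norm_num)]
    exact hp
  have : ((2 : ℝ) ^ p - 1) * F 0 = 0 := by linarith
  exact (mul_eq_zero.1 this).resolve_left (sub_ne_zero.2 h2p)

theorem div_mul_le_of_le_comp_of_homogeneous {α : Type*} [SMul ℝ α] {P : α → Prop}
    {I J : α → ℝ} {p : ℝ} (hp : p ≠ 0) (hP : ∀ c : ℝ, 0 < c → ∀ φ, P φ → P (c • φ))
    (hI : ∀ c : ℝ, 0 < c → ∀ φ, P φ → I (c • φ) = c ^ p * I φ)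
    (hJ : ∀ c : ℝ, 0 < c → ∀ φ, P φ → J (c • φ) = c ^ p * J φ)
    (hI_nonneg : ∀ φ, P φ → 0 ≤ I φ) (hJ_of_I_eq_zero : ∀ φ, P φ → I φ = 0 → 0 ≤ J φ)
    {θ : ℝ → ℝ} {t₀ : ℝ} (ht₀ : 0 < t₀) (hθ : ∀ φ, P φ → θ (I φ) ≤ J φ) :
    ∀ φ, P φ → θ t₀ / t₀ * I φ ≤ J φ := by
  intro φ hφ
  rcases (hI_nonneg φ hφ).eq_or_lt with hI0 | hIpos
  · rw [← hI0, mul_zero]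
    exact hJ_of_I_eq_zero φ hφ hI0.symm
  set c := (t₀ / I φ) ^ p⁻¹
  have hc : 0 < c := by positivity
  have hcp : c ^ p = t₀ / I φ := Real.rpow_inv_rpow (by positivity) hp
  have key := hθ (c • φ) (hP c hc φ hφ)
  rw [hI c hc φ hφ, hJ c hc φ hφ, hcp, div_mul_cancel₀ _ hIpos.ne'] at key
  calc θ t₀ / t₀ * I φ ≤ t₀ / I φ * J φ / t₀ * I φ := by gcongr
    _ = J φ := by field_simp

lemma integral_comp_eq_zero_of_integral_norm_rpow_eq_zero {X E : Type*} [MeasurableSpace X]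
    {μ : Measure X} {s : Set X} [NormedAddCommGroup E] {g : X → E} {p : ℝ} (hp : p ≠ 0)
    (hg : IntegrableOn (fun x => ‖g x‖ ^ p) s μ) (h : ∫ x in s, ‖g x‖ ^ p ∂μ = 0)
    {F : E → ℝ} (hF : F 0 = 0) : ∫ x in s, F (g x) ∂μ = 0 := by
  have hae : (fun x => ‖g x‖ ^ p) =ᵐ[μ.restrict s] 0 :=
    (integral_eq_zero_iff_of_nonneg (fun x => by positivity) hg).1 h
  refine integral_eq_zero_of_ae ?_
  filter_upwards [hae] with x hx
  rw [Pi.zero_apply, Real.rpow_eq_zero (norm_nonneg _) hp, norm_eq_zero] at hx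
  simp [hx, hF]

lemma gradHS_const_smul {n N : ℕ} (c : ℝ)
    (φ : EuclideanSpace ℝ (Fin n) → EuclideanSpace ℝ (Fin N)) :
    gradHS (c • φ) = c • gradHS φ := by
  ext x q
  simp [gradHS, fderiv_const_smul_field]

lemma continuous_gradHS {n N : ℕ} {φ : EuclideanSpace ℝ (Fin n) → EuclideanSpace ℝ (Fin N)}
    (hφ : ContDiff ℝ 1 φ) : Continuous (gradHS φ) := by
  refine (PiLp.continuous_toLp 2 _).comp (continuous_pi fun q => ?_)
  exact (EuclideanSpace.proj q.1).continuous.comp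
    ((ContinuousLinearMap.apply ℝ _ (EuclideanSpace.single q.2 (1 : ℝ))).continuous.comp
      (hφ.continuous_fderiv one_ne_zero))

namespace ZeroBoundaryTest

variable {n N : ℕ} {φ : EuclideanSpace ℝ (Fin n) → EuclideanSpace ℝ (Fin N)}

lemma const_smul (hφ : ZeroBoundaryTest φ) (c : ℝ) : ZeroBoundaryTest (c • φ) := by
  have hsupp : tsupport (c • φ) ⊆ tsupport φ := tsupport_smul_subset_right (fun _ => c) φ
  exact ⟨hφ.1.const_smul c, hφ.2.1.smul_left (f := fun _ => c), hsupp.trans hφ.2.2⟩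

lemma integrableOn_norm_gradHS_rpow (hφ : ZeroBoundaryTest φ) {p : ℝ} (hp : 0 ≤ p) :
    IntegrableOn (fun x => ‖gradHS φ x‖ ^ p) (ball 0 1) :=
  (((continuous_gradHS hφ.1).norm.rpow_const fun _ => Or.inr hp).continuousOn.integrableOn_compact
    (isCompact_closedBall 0 1)).mono_set ball_subset_closedBall

end ZeroBoundaryTest

/-- If `F` is positively `p`-homogeneous and `∫_{B₁} F(∇φ) ≥ θ(∫_{B₁}|∇φ|ᵖ)` for some
function `θ` with `θ(t₀) > 0` at some `t₀ > 0`, then there is `a > 0` with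
`∫_{B₁} F(∇φ) ≥ a ∫_{B₁} |∇φ|ᵖ` for all admissible `φ`. -/
theorem homogeneous_coercivity_improvement
    (n N : ℕ) (p : ℝ) (hp : 1 ≤ p)
    (F : EuclideanSpace ℝ (Fin N × Fin n) → ℝ)
    (hFhom : ∀ lam : ℝ, 0 < lam → ∀ z, F (lam • z) = lam ^ p * F z)
    (θ : ℝ → ℝ) (t₀ : ℝ) (ht₀ : 0 < t₀) (hθ : 0 < θ t₀)
    (hcoer : ∀ φ, ZeroBoundaryTest φ →
      θ (∫ x in Metric.ball (0 : EuclideanSpace ℝ (Fin n)) 1, ‖gradHS φ x‖ ^ p) ≤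
        ∫ x in Metric.ball (0 : EuclideanSpace ℝ (Fin n)) 1, F (gradHS φ x)) :
    ∃ a : ℝ, 0 < a ∧ ∀ φ, ZeroBoundaryTest φ →
      a * ∫ x in Metric.ball (0 : EuclideanSpace ℝ (Fin n)) 1, ‖gradHS φ x‖ ^ p ≤
        ∫ x in Metric.ball (0 : EuclideanSpace ℝ (Fin n)) 1, F (gradHS φ x) := by
  have hp0 : 0 < p := by linarith
  refine ⟨θ t₀ / t₀, div_pos hθ ht₀, div_mul_le_of_le_comp_of_homogeneous hp0.ne'
    (fun c _ φ hφ => hφ.const_smul c) ?_ ?_ (fun φ _ => by positivity) ?_ ht₀ hcoer⟩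
  · intro c hc φ _
    simp_rw [gradHS_const_smul, Pi.smul_apply, norm_smul, Real.norm_of_nonneg hc.le,
      Real.mul_rpow hc.le (norm_nonneg _), integral_const_mul]
  · intro c hc φ _
    simp_rw [gradHS_const_smul, Pi.smul_apply, hFhom c hc, integral_const_mul]
  · intro φ hφ h
    exact (integral_comp_eq_zero_of_integral_norm_rpow_eq_zero hp0.ne'
      (hφ.integrableOn_norm_gradHS_rpow hp0.le) h (map_zero_of_smul_eq_rpow_mul hp0.ne' hFhom)).ge
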